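/- Consider the brick wall tiling of the plane with 4 colors: tiles are axis-parallel unit squares, rows of adjacent squares where odd rows alternate colors 1,2 and even rows (placed directly below) alternate colors 3,4 with a shift of 2. The minimal distance between two same-colored points in different tiles is exactly 1, hence the fault tolerance of this consistent rounding scheme is 1/2. -/

import Mathlib

/-!
Two same-colored tiles differ in some index by a nonzero even integer, so along that
axis their unit intervals are separated by a gap of length at least `1`, and Euclidean distance
dominates the distance of each coordinate. The bound is attained by the squares `(0, 0)` and
`(2, 0)` at the points `(1, 0)` and `(2, 0)`.
-/

/-- The unit square tile with lower-left corner `(i, j) ∈ ℤ²`. -/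
def unitSquare (i j : ℤ) : Set (EuclideanSpace ℝ (Fin 2)) :=
  {x | x 0 ∈ Set.Icc (i : ℝ) ((i : ℝ) + 1) ∧ x 1 ∈ Set.Icc (j : ℝ) ((j : ℝ) + 1)}

/-- The 4-coloring of the unit squares: rows with even `j` alternate two colors and rows
with odd `j` alternate the other two colors (colors 1,2 on odd rows and 3,4 shifted by 2 on
even rows); equivalently, the color of the square `(i, j)` is `(i mod 2, j mod 2)`. -/
def squareColor (i j : ℤ) : ZMod 2 × ZMod 2 := ((i : ZMod 2), (j : ZMod 2))

open Set

lemma squareColor_eq_iff {i j i' j' : ℤ} :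
    squareColor i j = squareColor i' j' ↔ i ≡ i' [ZMOD 2] ∧ j ≡ j' [ZMOD 2] := by
  simp only [squareColor, Prod.mk.injEq, ZMod.intCast_eq_intCast_iff, Nat.cast_ofNat]

lemma one_le_dist_of_mem_Icc_of_modEq {a b : ℤ} (hab : a ≡ b [ZMOD 2]) (hne : a ≠ b)
    {u v : ℝ} (hu : u ∈ Icc (a : ℝ) (a + 1)) (hv : v ∈ Icc (b : ℝ) (b + 1)) :
    1 ≤ dist u v := by
  have hgap : a + 2 ≤ b ∨ b + 2 ≤ a := by
    rw [Int.ModEq] at hab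
    omega
  rw [Real.dist_eq, le_abs]
  rcases hgap with h | h
  · have : (a : ℝ) + 2 ≤ b := by exact_mod_cast h
    right; linarith [hu.2, hv.1]
  · have : (b : ℝ) + 2 ≤ a := by exact_mod_cast h
    left; linarith [hu.1, hv.2]

lemma one_le_dist_of_mem_unitSquare {i j i' j' : ℤ} (hne : (i, j) ≠ (i', j'))
    (hc : squareColor i j = squareColor i' j') {x y : EuclideanSpace ℝ (Fin 2)}
    (hx : x ∈ unitSquare i j) (hy : y ∈ unitSquare i' j') : 1 ≤ dist x y := by
  obtain ⟨hi, hj⟩ := squareColor_eq_iff.mp hc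
  by_cases hii : i = i'
  · have hjj : j ≠ j' := fun h => hne (by rw [hii, h])
    exact (one_le_dist_of_mem_Icc_of_modEq hj hjj hx.2 hy.2).trans (PiLp.dist_apply_le x y 1)
  · exact (one_le_dist_of_mem_Icc_of_modEq hi hii hx.1 hy.1).trans (PiLp.dist_apply_le x y 0)

/-- In the 4-colored brick wall tiling of ℝ² by unit squares, the minimal
Euclidean distance between two same-colored points in different tiles is exactly 1
(hence the fault tolerance of the scheme is 1/2). -/
theorem stmt_6 :
    IsLeast {d : ℝ | ∃ i j i' j' : ℤ, (i, j) ≠ (i', j') ∧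
        squareColor i j = squareColor i' j' ∧
        ∃ x ∈ unitSquare i j, ∃ y ∈ unitSquare i' j', d = dist x y} 1 := by
  constructor
  · refine ⟨0, 0, 2, 0, by decide, by decide, !₂[1, 0], ?_, !₂[2, 0], ?_, ?_⟩
    · constructor <;> norm_num [unitSquare]
    · constructor <;> norm_num [unitSquare]
    · rw [EuclideanSpace.dist_eq, Fin.sum_univ_two]
      norm_num [Real.dist_eq]
  · rintro d ⟨i, j, i', j', hne, hc, x, hx, y, hy, rfl⟩
    exact one_le_dist_of_mem_unitSquare hne hc hx hy
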